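/- There exist universal constants C₁, C₂ > 0 such that the following holds: for every a ∈ (0, e^{−2π}], every δ ∈ [0, π] and every y ∈ [−π, π], one has Re[S_a(δ + iy)] ≤ −a·δ·(C₁·y² − C₂·δ²) and Re[S_a(−δ + iy)] ≥ a·δ·(C₁·y² − C₂·δ²). -/

import Mathlib

/-!
Fix `y` and put `c = cos y`. Then `x ↦ Re S_a(x + iy)` equals
`L(a eˣ) - L(a e⁻ˣ) - 2ax/(1+a)` with `L(w) = log |1 + w e^{iy}|`; it vanishes at `x = 0` and its
derivative is `h(a eˣ) + h(a e⁻ˣ) - 2a/(1+a)` with `h(w) = Re (ζ/(1+ζ))`, `ζ = w e^{iy}`.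
For `w ≤ 1/2`, `h(w)` falls short of its value `w/(1+w)` at `c = 1` by at least `(1 - c) w / 8`,
while the `c = 1` terms form a second difference of `w ↦ w/(1+w)` along `a eˣ · a e⁻ˣ = a²`,
bounded by `2a (cosh x - 1) ≤ a x² e^{x²/2}`. Integrating the derivative bound over `[0, δ]` gives
`Re S_a(δ + iy) ≤ -aδ(1 - cos y)/4 + e^{δ²/2} aδ³/3`, and `1 - cos y ≥ 2y²/π²` on `[-π, π]`.
The bound at `-δ + iy` follows from the oddness of `S_a`.
-/

open Real

noncomputable def Sa (a : ℝ) (z : ℂ) : ℂ :=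
  Complex.log (1 + (a : ℂ) * Complex.exp z) - Complex.log (1 + (a : ℂ) * Complex.exp (-z)) -
    2 * (a : ℂ) * z / (1 + (a : ℂ))

/-- `reLogOneAdd (cos θ) w = log |1 + w e^{iθ}|`. -/
noncomputable def reLogOneAdd (c w : ℝ) : ℝ := Real.log (1 + 2 * c * w + w ^ 2) / 2

lemma re_log_one_add_mul_exp (a x y : ℝ) :
    (Complex.log (1 + (a : ℂ) * Complex.exp ((x : ℂ) + Complex.I * (y : ℂ)))).re =
      reLogOneAdd (cos y) (a * exp x) := by
  have hnormSq : Complex.normSq (1 + (a : ℂ) * Complex.exp ((x : ℂ) + Complex.I * (y : ℂ))) =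
      1 + 2 * cos y * (a * exp x) + (a * exp x) ^ 2 := by
    rw [Complex.normSq_apply]
    simp only [Complex.add_re, Complex.one_re, Complex.mul_re, Complex.ofReal_re, Complex.exp_re,
      Complex.I_re, zero_mul, Complex.I_im, Complex.ofReal_im, mul_zero, sub_self, add_zero,
      Complex.add_im, Complex.mul_im, one_mul, zero_add, Complex.exp_im, sub_zero, Complex.one_im]
    linear_combination (a * exp x) ^ 2 * sin_sq_add_cos_sq y
  rw [Complex.log_re, reLogOneAdd, ← hnormSq, ← Complex.sq_norm, Real.log_pow]
  push_cast
  ring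

lemma re_Sa (a x y : ℝ) :
    (Sa a ((x : ℂ) + Complex.I * (y : ℂ))).re =
      reLogOneAdd (cos y) (a * exp x) - reLogOneAdd (cos y) (a * exp (-x)) -
        2 * a * x / (1 + a) := by
  have hneg : -((x : ℂ) + Complex.I * (y : ℂ)) = ((-x : ℝ) : ℂ) + Complex.I * ((-y : ℝ) : ℂ) := by
    push_cast; ring
  have hlin : (2 * (a : ℂ) * ((x : ℂ) + Complex.I * (y : ℂ)) / (1 + (a : ℂ))).re =
      2 * a * x / (1 + a) := by
    rw [show (1 + (a : ℂ)) = ((1 + a : ℝ) : ℂ) by push_cast; ring, Complex.div_ofReal_re]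
    simp
  rw [Sa, hneg, Complex.sub_re, Complex.sub_re, re_log_one_add_mul_exp, re_log_one_add_mul_exp,
    cos_neg, hlin]

lemma Sa_neg (a : ℝ) (z : ℂ) : Sa a (-z) = -Sa a z := by
  simp only [Sa, neg_neg]
  ring

lemma one_add_two_mul_add_sq_pos {c w : ℝ} (hc : -1 ≤ c) (hw₀ : 0 ≤ w) (hw : w < 1) :
    0 < 1 + 2 * c * w + w ^ 2 := by
  nlinarith

lemma hasDerivAt_reLogOneAdd {c w : ℝ} (hw : 1 + 2 * c * w + w ^ 2 ≠ 0) :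
    HasDerivAt (reLogOneAdd c) ((c + w) / (1 + 2 * c * w + w ^ 2)) w := by
  have h : HasDerivAt (fun w => 1 + 2 * c * w + w ^ 2) (2 * c + 2 * w) w :=
    ((((hasDerivAt_id' w).const_mul (2 * c)).const_add 1).add (hasDerivAt_pow 2 w)).congr_deriv
      (by ring)
  exact ((h.log hw).div_const 2).congr_deriv (by field_simp)

/-- The left-hand side is `Re (ζ / (1 + ζ))` for `ζ = w e^{iθ}`, `c = cos θ`. -/
lemma mul_add_div_one_add_two_mul_add_sq_le {c w : ℝ} (hc₁ : -1 ≤ c) (hc₂ : c ≤ 1)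
    (hw₀ : 0 ≤ w) (hw : w ≤ 1 / 2) :
    w * (c + w) / (1 + 2 * c * w + w ^ 2) ≤ w / (1 + w) - (1 - c) * w / 8 := by
  have hN := one_add_two_mul_add_sq_pos hc₁ hw₀ (by linarith)
  have hdiff : w / (1 + w) - w * (c + w) / (1 + 2 * c * w + w ^ 2) =
      (1 - c) * w * (1 - w) / ((1 + w) * (1 + 2 * c * w + w ^ 2)) := by
    rw [div_sub_div _ _ (by positivity) hN.ne']
    ring
  have hgap : (1 - c) * w / 8 ≤ (1 - c) * w * (1 - w) / ((1 + w) * (1 + 2 * c * w + w ^ 2)) := by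
    rw [le_div_iff₀ (by positivity)]
    have hcw : 0 ≤ (1 - c) * w := mul_nonneg (by linarith) hw₀
    have hden : (1 + w) * (1 + 2 * c * w + w ^ 2) ≤ 8 * (1 - w) := by nlinarith
    nlinarith
  linarith

lemma div_one_add_add_div_one_add_sub_le {a w₁ w₂ : ℝ} (ha : 0 ≤ a)
    (hw₁ : 0 ≤ w₁) (hw₂ : 0 ≤ w₂) (hw : w₁ * w₂ = a ^ 2) :
    w₁ / (1 + w₁) + w₂ / (1 + w₂) - 2 * a / (1 + a) ≤ w₁ + w₂ - 2 * a := by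
  have hS : 2 * a ≤ w₁ + w₂ := by nlinarith [sq_nonneg (w₁ - w₂)]
  have hdiff : w₁ / (1 + w₁) + w₂ / (1 + w₂) - 2 * a / (1 + a) =
      (1 - a) * (w₁ + w₂ - 2 * a) / ((1 + w₁) * (1 + w₂) * (1 + a)) := by
    field_simp; linear_combination 2 * hw
  rw [hdiff, div_le_iff₀ (by positivity)]
  have hden : 1 - a ≤ (1 + w₁) * (1 + w₂) * (1 + a) := by nlinarith [mul_nonneg hw₁ hw₂]
  nlinarith

lemma cosh_sub_one_le (x : ℝ) : cosh x - 1 ≤ x ^ 2 / 2 * exp (x ^ 2 / 2) := by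
  have h := add_one_le_exp (-(x ^ 2 / 2))
  have hinv : exp (-(x ^ 2 / 2)) * exp (x ^ 2 / 2) = 1 := by rw [← exp_add]; simp
  nlinarith [cosh_le_exp_half_sq x, exp_pos (x ^ 2 / 2)]

noncomputable def derivReSa (a c x : ℝ) : ℝ :=
  a * exp x * (c + a * exp x) / (1 + 2 * c * (a * exp x) + (a * exp x) ^ 2) +
    a * exp (-x) * (c + a * exp (-x)) / (1 + 2 * c * (a * exp (-x)) + (a * exp (-x)) ^ 2) -
      2 * a / (1 + a)

lemma hasDerivAt_re_Sa {a x : ℝ} (ha : 0 ≤ a) (h₁ : a * exp x < 1) (h₂ : a * exp (-x) < 1)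
    (y : ℝ) :
    HasDerivAt (fun x : ℝ => (Sa a ((x : ℂ) + Complex.I * (y : ℂ))).re)
      (derivReSa a (cos y) x) x := by
  have hN₁ := one_add_two_mul_add_sq_pos (neg_one_le_cos y) (by positivity) h₁
  have hN₂ := one_add_two_mul_add_sq_pos (neg_one_le_cos y) (by positivity) h₂
  have hw₁ : HasDerivAt (fun x => a * exp x) (a * exp x) x := (hasDerivAt_exp x).const_mul a
  have hw₂ : HasDerivAt (fun x => a * exp (-x)) (-(a * exp (-x))) x := by
    simpa using ((hasDerivAt_neg x).exp).const_mul a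
  have hlin : HasDerivAt (fun x => 2 * a * x / (1 + a)) (2 * a / (1 + a)) x := by
    simpa using ((hasDerivAt_id x).const_mul (2 * a)).div_const (1 + a)
  simp_rw [re_Sa]
  refine ((((hasDerivAt_reLogOneAdd hN₁.ne').comp x hw₁).sub
    ((hasDerivAt_reLogOneAdd hN₂.ne').comp x hw₂)).sub hlin).congr_deriv ?_
  rw [derivReSa]
  ring

lemma derivReSa_le {a c x : ℝ} (ha : 0 < a) (hx : 0 ≤ x) (hax : a * exp x ≤ 1 / 2)
    (hc₁ : -1 ≤ c) (hc₂ : c ≤ 1) :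
    derivReSa a c x ≤ 2 * a * (cosh x - 1) - a * (1 - c) / 4 := by
  have hw₂ : a * exp (-x) ≤ a * exp x :=
    mul_le_mul_of_nonneg_left (exp_le_exp.2 (by linarith)) ha.le
  have hA₁ := mul_add_div_one_add_two_mul_add_sq_le hc₁ hc₂ (by positivity) hax
  have hA₂ := mul_add_div_one_add_two_mul_add_sq_le hc₁ hc₂ (by positivity) (hw₂.trans hax)
  have hB := div_one_add_add_div_one_add_sub_le ha.le (by positivity : 0 ≤ a * exp x)
    (by positivity : 0 ≤ a * exp (-x))
    (by rw [mul_mul_mul_comm, ← exp_add, add_neg_cancel, exp_zero]; ring)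
  have hcosh : a * exp x + a * exp (-x) = 2 * a * cosh x := by rw [cosh_eq]; ring
  have hc : 0 ≤ (1 - c) * a * (cosh x - 1) :=
    mul_nonneg (mul_nonneg (by linarith) ha.le) (by linarith [one_le_cosh x])
  rw [derivReSa]
  nlinarith

lemma re_Sa_le {a δ : ℝ} (ha : 0 < a) (hδ : 0 ≤ δ) (haδ : a * exp δ ≤ 1 / 2) (y : ℝ) :
    (Sa a ((δ : ℂ) + Complex.I * (y : ℂ))).re ≤
      -(a * δ * (1 - cos y)) / 4 + exp (δ ^ 2 / 2) / 3 * a * δ ^ 3 := by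
  set K := exp (δ ^ 2 / 2)
  set G : ℝ → ℝ := fun x =>
    (Sa a ((x : ℂ) + Complex.I * (y : ℂ))).re + a * x * (1 - cos y) / 4 - K / 3 * a * x ^ 3
  have hax : ∀ x ∈ Set.Icc 0 δ, a * exp x ≤ 1 / 2 := fun x hx =>
    (mul_le_mul_of_nonneg_left (exp_le_exp.2 hx.2) ha.le).trans haδ
  have hG : ∀ x ∈ Set.Icc 0 δ,
      HasDerivAt G (derivReSa a (cos y) x + a * (1 - cos y) / 4 - K * a * x ^ 2) x := by
    intro x hx
    have hax' : a * exp (-x) < 1 := by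
      have := mul_le_mul_of_nonneg_left (exp_le_exp.2 (by linarith [hx.1] : -x ≤ x)) ha.le
      linarith [hax x hx]
    have hlin : HasDerivAt (fun x => a * x * (1 - cos y) / 4) (a * (1 - cos y) / 4) x := by
      simpa using (((hasDerivAt_id x).const_mul a).mul_const (1 - cos y)).div_const 4
    have hcub : HasDerivAt (fun x => K / 3 * a * x ^ 3) (K * a * x ^ 2) x := by
      refine ((hasDerivAt_pow 3 x).const_mul (K / 3 * a)).congr_deriv ?_
      push_cast; ring
    exact ((hasDerivAt_re_Sa ha.le (by linarith [hax x hx]) hax' y).add hlin).sub hcub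
  have hG' : ∀ x ∈ Set.Icc 0 δ,
      derivReSa a (cos y) x + a * (1 - cos y) / 4 - K * a * x ^ 2 ≤ 0 := by
    intro x hx
    have hD := derivReSa_le ha hx.1 (hax x hx) (neg_one_le_cos y) (cos_le_one y)
    have hK : exp (x ^ 2 / 2) ≤ K := exp_le_exp.2 (by nlinarith [hx.1, hx.2])
    have hcosh : 2 * a * (cosh x - 1) ≤ K * a * x ^ 2 := by
      have h₁ := cosh_sub_one_le x
      have h₂ := mul_le_mul_of_nonneg_left hK (by positivity : 0 ≤ a * x ^ 2)
      nlinarith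
    linarith
  have hanti : AntitoneOn G (Set.Icc 0 δ) :=
    antitoneOn_of_hasDerivWithinAt_nonpos (convex_Icc 0 δ)
      (fun x hx => (hG x hx).continuousAt.continuousWithinAt)
      (fun x hx => (hG x (interior_subset hx)).hasDerivWithinAt)
      (fun x hx => hG' x (interior_subset hx))
  have hG0 : G 0 = 0 := by simp [G, re_Sa]
  have hGδ := hanti ⟨le_rfl, hδ⟩ ⟨hδ, le_rfl⟩ hδ
  simp only [G] at hGδ hG0
  linarith

lemma re_Sa_le_of_abs_le_pi {a δ y : ℝ} (ha : 0 < a) (ha' : a ≤ exp (-(2 * π)))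
    (hδ : δ ∈ Set.Icc 0 π) (hy : |y| ≤ π) :
    (Sa a ((δ : ℂ) + Complex.I * (y : ℂ))).re ≤
      -(a * δ * (1 / (2 * π ^ 2) * y ^ 2 - exp (π ^ 2 / 2) / 3 * δ ^ 2)) := by
  have haδ : a * exp δ ≤ 1 / 2 := by
    have h2 : 2 ≤ exp π := by linarith [add_one_le_exp π, pi_gt_three]
    calc a * exp δ ≤ exp (-(2 * π)) * exp π := by gcongr; exact hδ.2
      _ = (exp π)⁻¹ := by rw [← exp_add, ← exp_neg]; ring_nf
      _ ≤ 1 / 2 := by rw [inv_eq_one_div]; gcongr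
  have hcos := cos_le_one_sub_mul_cos_sq hy
  have hK : exp (δ ^ 2 / 2) ≤ exp (π ^ 2 / 2) := exp_le_exp.2 (by nlinarith [hδ.1, hδ.2])
  have haδ₀ : 0 ≤ a * δ := mul_nonneg ha.le hδ.1
  have h₁ : a * δ * (1 / (2 * π ^ 2) * y ^ 2) ≤ a * δ * (1 - cos y) / 4 := by
    rw [show 1 / (2 * π ^ 2) * y ^ 2 = 2 / π ^ 2 * y ^ 2 / 4 by ring]
    nlinarith
  have h₂ : exp (δ ^ 2 / 2) / 3 * a * δ ^ 3 ≤ a * δ * (exp (π ^ 2 / 2) / 3 * δ ^ 2) := by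
    linarith [mul_le_mul_of_nonneg_left hK (mul_nonneg haδ₀ (sq_nonneg δ))]
  linarith [re_Sa_le ha hδ.1 haδ y]

theorem stmt8 :
    ∃ C₁ > 0, ∃ C₂ > 0, ∀ a : ℝ, a ∈ Set.Ioc 0 (Real.exp (-(2 * Real.pi))) →
      ∀ δ ∈ Set.Icc (0:ℝ) Real.pi, ∀ y ∈ Set.Icc (-Real.pi) Real.pi,
        (Sa a ((δ : ℂ) + Complex.I * (y : ℂ))).re ≤ -(a * δ * (C₁ * y ^ 2 - C₂ * δ ^ 2)) ∧
        a * δ * (C₁ * y ^ 2 - C₂ * δ ^ 2) ≤ (Sa a (((-δ : ℝ) : ℂ) + Complex.I * (y : ℂ))).re := by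
  refine ⟨1 / (2 * π ^ 2), by positivity, exp (π ^ 2 / 2) / 3, by positivity, ?_⟩
  rintro a ⟨ha, ha'⟩ δ hδ y ⟨hy₁, hy₂⟩
  have hy : |y| ≤ π := abs_le.2 ⟨hy₁, hy₂⟩
  refine ⟨re_Sa_le_of_abs_le_pi ha ha' hδ hy, ?_⟩
  have h := re_Sa_le_of_abs_le_pi ha ha' hδ (y := -y) (by rwa [abs_neg])
  rw [neg_sq] at h
  rw [show ((-δ : ℝ) : ℂ) + Complex.I * (y : ℂ) = -((δ : ℂ) + Complex.I * ((-y : ℝ) : ℂ)) by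
    push_cast; ring, Sa_neg, Complex.neg_re]
  linarith
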